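/- The expected number of simple tiles (lag 0) with temporal period τ and spatial period σ under a uniformly random n-state rule equals Σ_{d | gcd(τ,σ)} φ(d) · C(n, τσ/d) · (τσ/d - 1)! / n^(τσ/d), and this converges to λ_{τ,σ} = (1/(τσ)) Σ_{d | gcd(τ,σ)} φ(d)·d as n → ∞. -/

import Mathlib

/-- The set of distinct states appearing in a tile. -/
def states (n τ σ : ℕ) [NeZero τ] [NeZero σ] (T : ZMod τ → ZMod σ → ZMod n) :
    Finset (ZMod n) :=
  Finset.image (fun p : ZMod τ × ZMod σ => T p.1 p.2) Finset.univ

/-- The set of distinct row-adjacent pairs appearing in a tile (the assignments). -/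
def pairs (n τ σ : ℕ) [NeZero τ] [NeZero σ] (T : ZMod τ → ZMod σ → ZMod n) :
    Finset (ZMod n × ZMod n) :=
  Finset.image (fun p : ZMod τ × ZMod σ => (T p.1 p.2, T p.1 (p.2 + 1))) Finset.univ

/-- `T` is generated by the rule `f`. -/
def GenBy (n τ σ : ℕ) (f : ZMod n → ZMod n → ZMod n) (T : ZMod τ → ZMod σ → ZMod n) : Prop :=
  ∀ i j, T (i + 1) (j + 1) = f (T i j) (T i (j + 1))

/-- The temporal period `τ` of `T` is minimal. -/
def MinTemporal (n τ σ : ℕ) (T : ZMod τ → ZMod σ → ZMod n) : Prop :=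
  ∀ t : ZMod τ, t ≠ 0 → ∃ i j, T (i + t) j ≠ T i j

/-- The spatial period `σ` of `T` is minimal. -/
def MinSpatial (n τ σ : ℕ) (T : ZMod τ → ZMod σ → ZMod n) : Prop :=
  ∀ c : ZMod σ, c ≠ 0 → ∃ i j, T i (j + c) ≠ T i j

/-- `T` is simple: its assignment number equals its number of states (lag 0). -/
def Simple (n τ σ : ℕ) [NeZero τ] [NeZero σ] (T : ZMod τ → ZMod σ → ZMod n) : Prop :=
  (pairs n τ σ T).card = (states n τ σ T).card

/-- The number of simple tiles (with minimal periods `τ`, `σ`, counted up to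
space-time rotation) generated by the rule `f`. -/
noncomputable def simpleTileCount (n τ σ : ℕ) [NeZero τ] [NeZero σ]
    (f : ZMod n → ZMod n → ZMod n) : ℕ :=
  Nat.card (Quot (fun (T₁ T₂ : {T : ZMod τ → ZMod σ → ZMod n //
      GenBy n τ σ f T ∧ MinTemporal n τ σ T ∧ MinSpatial n τ σ T ∧ Simple n τ σ T}) =>
    ∃ (t : ZMod τ) (c : ZMod σ), ∀ i j, T₂.1 i j = T₁.1 (i + t) (j + c)))

/-- `Σ_{d | gcd(τ,σ)} φ(d) · C(n, τσ/d) · (τσ/d - 1)! / n^(τσ/d)`. -/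
noncomputable def expectedSimpleTiles (τ σ n : ℕ) : ℝ :=
  ∑ d ∈ (Nat.gcd τ σ).divisors,
    ((Nat.totient d : ℝ) * (Nat.choose n (τ * σ / d)) * (Nat.factorial (τ * σ / d - 1))) /
      (n : ℝ) ^ (τ * σ / d)

/-- `λ_{τ,σ} = (1/(τσ)) Σ_{d | gcd(τ,σ)} φ(d)·d`. -/
noncomputable def lamR (τ σ : ℕ) : ℝ :=
  (∑ d ∈ (Nat.gcd τ σ).divisors, ((Nat.totient d : ℝ) * d)) / (τ * σ)

/-!
The group `G = ZMod τ × ZMod σ` acts on tiles by translation, and the stabilizer `H` of a tile is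
its group of periods. In a simple tile every state determines its right neighbour, so by the rule
two cells with equal states keep equal states under any common translation: two cells carry the
same state iff they differ by a period. Hence the simple generated tiles with stabilizer `H` are
the injective colourings of `G ⧸ H`, counted by `n (n-1) ⋯ (n-s+1)` with `s = |G ⧸ H|` the number
of states, and a rule generates such a tile iff it takes prescribed values on the `s` assignments
of the tile. Minimality of both periods says that `H` meets both axes trivially; such an `H` of
order `d` is cyclic with `d ∣ gcd τ σ`, and its generators are the `p` whose coordinates both have
order `d`: there are `φ(d)²` of these and each `H` has `φ(d)` generators, so there are `φ(d)`
such `H`. Counting tiles up to translation weighs each one by `1 / |orbit| = 1 / s`, and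
`n (n-1) ⋯ (n-s+1) / n^s → 1`.
-/

open Finset Function AddAction

lemma Nat.card_quot_eq_sum_inv_card {X K : Type*} [Fintype X] [DivisionRing K] [CharZero K]
    {r : X → X → Prop} [DecidableRel r] (hr : Equivalence r) :
    (Nat.card (Quot r) : K) = ∑ x, (#{y | r x y} : K)⁻¹ := by
  classical
  let s : Setoid X := ⟨r, hr⟩
  have hclass (x : X) : #{y | r x y} = #{y | Quotient.mk s y = Quotient.mk s x} := by
    congr 1
    ext y
    simpa [Quotient.eq] using ⟨hr.symm, hr.symm⟩
  have hfibre (q : Quotient s) : ∑ x with Quotient.mk s x = q, (#{y | r x y} : K)⁻¹ = 1 := by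
    obtain ⟨x₀, rfl⟩ := Quotient.mk_surjective q
    rw [sum_congr rfl fun x hx => by rw [hclass, (mem_filter.1 hx).2], sum_const, nsmul_eq_mul,
      mul_inv_cancel₀]
    exact Nat.cast_ne_zero.2 (card_ne_zero_of_mem (mem_filter.2 ⟨mem_univ x₀, rfl⟩))
  change (Nat.card (Quotient s) : K) = _
  rw [← sum_fiberwise univ (Quotient.mk s), sum_congr rfl fun q _ => hfibre q, sum_const,
    Finset.card_univ, nsmul_one, Nat.card_eq_fintype_card]

lemma card_filter_eqOn_mul_pow {X Y : Type*} [Fintype X] [DecidableEq X] [Fintype Y]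
    [DecidableEq Y] (s : Finset X) (g₀ : X → Y) :
    #{g : X → Y | ∀ x ∈ s, g x = g₀ x} * Fintype.card Y ^ #s = Fintype.card Y ^ Fintype.card X := by
  have : ({g : X → Y | ∀ x ∈ s, g x = g₀ x} : Finset (X → Y)) =
      Fintype.piFinset fun x => if x ∈ s then {g₀ x} else univ := by
    ext g
    simp only [mem_filter, mem_univ, true_and, Fintype.mem_piFinset]
    refine forall_congr' fun x => ?_
    split_ifs with hx <;> simp [hx]
  simp only [this, Fintype.card_piFinset, apply_ite card, card_singleton, Finset.card_univ,
    prod_ite, prod_const_one, one_mul, prod_const, ← pow_add]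
  rw [filter_not, card_sdiff, filter_mem_eq_inter, univ_inter, inter_univ, Finset.card_univ,
    Nat.sub_add_cancel (card_le_univ s)]

def QuotientAddGroup.liftEmbeddingEquiv {G α : Type*} [AddGroup G] (H : AddSubgroup G) :
    {F : G → α // ∀ x y, F x = F y ↔ -x + y ∈ H} ≃ (G ⧸ H ↪ α) where
  toFun F := ⟨Quotient.lift F.1 fun _ _ h => (F.2 _ _).2 (QuotientAddGroup.leftRel_apply.1 h), by
    rintro ⟨x⟩ ⟨y⟩ h
    exact QuotientAddGroup.eq.2 ((F.2 x y).1 h)⟩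
  invFun L := ⟨L ∘ QuotientAddGroup.mk, fun _ _ => L.injective.eq_iff.trans QuotientAddGroup.eq⟩
  left_inv _ := rfl
  right_inv L := by
    ext ⟨x⟩
    rfl

lemma AddSubgroup.card_quotient_eq_card_div {G : Type*} [AddGroup G] [Finite G]
    (H : AddSubgroup G) : Nat.card (G ⧸ H) = Nat.card G / Nat.card H := by
  rw [H.card_eq_card_quotient_mul_card_addSubgroup, Nat.mul_div_cancel _ Nat.card_pos]

lemma injective_comp_zmultiples_subtype {G G' : Type*} [AddGroup G] [AddGroup G'] (f : G →+ G')
    {p : G} (h : addOrderOf (f p) = addOrderOf p) :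
    Injective (f.comp (AddSubgroup.zmultiples p).subtype) := by
  rw [injective_iff_map_eq_zero]
  rintro ⟨_, k, rfl⟩ hk
  have hk : k • f p = 0 := by simpa using hk
  rw [← addOrderOf_dvd_iff_zsmul_eq_zero, h, addOrderOf_dvd_iff_zsmul_eq_zero] at hk
  exact Subtype.ext hk

open scoped Classical in
lemma card_filter_zmultiples_eq_totient {G : Type*} [AddGroup G] [Fintype G]
    (H : AddSubgroup G) [IsAddCyclic H] :
    #{p : G | AddSubgroup.zmultiples p = H} = (Nat.card H).totient := by
  have : ({p : G | AddSubgroup.zmultiples p = H} : Finset G) =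
      ({x : H | addOrderOf x = Nat.card H} : Finset H).map (Embedding.subtype _) := by
    ext p
    simp only [mem_filter, mem_univ, true_and, mem_map, Embedding.subtype_apply]
    constructor
    · rintro rfl
      exact ⟨⟨p, AddSubgroup.mem_zmultiples p⟩, by
        rw [AddSubgroup.addOrderOf_mk, Nat.card_zmultiples], rfl⟩
    · rintro ⟨x, hx, rfl⟩
      refine AddSubgroup.eq_of_le_of_card_ge (AddSubgroup.zmultiples_le.2 x.2) ?_
      rw [Nat.card_zmultiples, AddSubgroup.addOrderOf_coe, hx]
  rw [this, card_map,
    IsAddCyclic.card_addOrderOf_eq_totient (Nat.card_eq_fintype_card (α := H)).dvd]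

lemma AddAction.stabilizer_vadd_of_addCommGroup {G α : Type*} [AddCommGroup G] [AddAction G α]
    (g : G) (a : α) : stabilizer G (g +ᵥ a) = stabilizer G a := by
  ext q
  rw [mem_stabilizer_iff, mem_stabilizer_iff, vadd_vadd, add_comm, ← vadd_vadd,
    vadd_left_cancel_iff]

section Translation

variable {n τ σ : ℕ}

instance tileAddAction : AddAction (ZMod τ × ZMod σ) (ZMod τ → ZMod σ → ZMod n) where
  vadd p T i j := T (i + p.1) (j + p.2)
  zero_vadd T := by
    funext i j
    exact congrArg₂ T (add_zero i) (add_zero j)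
  add_vadd p q T := by
    funext i j
    exact congrArg₂ T (add_assoc i p.1 q.1).symm (add_assoc j p.2 q.2).symm

lemma tile_vadd_apply (p : ZMod τ × ZMod σ) (T : ZMod τ → ZMod σ → ZMod n) (i : ZMod τ)
    (j : ZMod σ) : (p +ᵥ T) i j = T (i + p.1) (j + p.2) := rfl

lemma mem_stabilizer_tile_iff {T : ZMod τ → ZMod σ → ZMod n} {p : ZMod τ × ZMod σ} :
    p ∈ stabilizer (ZMod τ × ZMod σ) T ↔ ∀ x, uncurry T (x + p) = uncurry T x :=
  mem_stabilizer_iff.trans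
    ⟨fun h x => congrFun (congrFun h x.1) x.2, fun h => funext fun i => funext fun j => h (i, j)⟩

lemma GenBy.vadd {f : ZMod n → ZMod n → ZMod n} {T : ZMod τ → ZMod σ → ZMod n}
    (hf : GenBy n τ σ f T) (p : ZMod τ × ZMod σ) : GenBy n τ σ f (p +ᵥ T) := fun i j => by
  simpa only [tile_vadd_apply, add_right_comm _ (1 : ZMod τ), add_right_comm _ (1 : ZMod σ)]
    using hf (i + p.1) (j + p.2)

lemma minSpatial_iff_injective {T : ZMod τ → ZMod σ → ZMod n} :
    MinSpatial n τ σ T ↔ Injective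
      ((AddMonoidHom.fst (ZMod τ) (ZMod σ)).comp (stabilizer (ZMod τ × ZMod σ) T).subtype) := by
  rw [injective_iff_map_eq_zero, MinSpatial]
  constructor
  · rintro h ⟨⟨t, c⟩, hp⟩ (ht : t = 0)
    subst ht
    by_contra hne
    obtain ⟨i, j, hij⟩ := h c fun hc => hne (by subst hc; rfl)
    exact hij (by simpa [tile_vadd_apply] using congrFun (congrFun (mem_stabilizer_iff.1 hp) i) j)
  · intro h c hc
    by_contra! hall
    have hp : ((0, c) : ZMod τ × ZMod σ) ∈ stabilizer _ T :=
      mem_stabilizer_tile_iff.2 fun x => by simpa [uncurry] using hall x.1 x.2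
    have h0 : (⟨_, hp⟩ : stabilizer (ZMod τ × ZMod σ) T) = 0 := h _ rfl
    exact hc (congrArg (fun a : stabilizer (ZMod τ × ZMod σ) T => (a : ZMod τ × ZMod σ).2) h0)

lemma minTemporal_iff_injective {T : ZMod τ → ZMod σ → ZMod n} :
    MinTemporal n τ σ T ↔ Injective
      ((AddMonoidHom.snd (ZMod τ) (ZMod σ)).comp (stabilizer (ZMod τ × ZMod σ) T).subtype) := by
  rw [injective_iff_map_eq_zero, MinTemporal]
  constructor
  · rintro h ⟨⟨t, c⟩, hp⟩ (hc : c = 0)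
    subst hc
    by_contra hne
    obtain ⟨i, j, hij⟩ := h t fun ht => hne (by subst ht; rfl)
    exact hij (by simpa [tile_vadd_apply] using congrFun (congrFun (mem_stabilizer_iff.1 hp) i) j)
  · intro h t ht
    by_contra! hall
    have hp : ((t, 0) : ZMod τ × ZMod σ) ∈ stabilizer _ T :=
      mem_stabilizer_tile_iff.2 fun x => by simpa [uncurry] using hall x.1 x.2
    have h0 : (⟨_, hp⟩ : stabilizer (ZMod τ × ZMod σ) T) = 0 := h _ rfl
    exact ht (congrArg (fun a : stabilizer (ZMod τ × ZMod σ) T => (a : ZMod τ × ZMod σ).1) h0)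

lemma MinTemporal.vadd {T : ZMod τ → ZMod σ → ZMod n} (hT : MinTemporal n τ σ T)
    (p : ZMod τ × ZMod σ) : MinTemporal n τ σ (p +ᵥ T) := by
  rwa [minTemporal_iff_injective, stabilizer_vadd_of_addCommGroup, ← minTemporal_iff_injective]

lemma MinSpatial.vadd {T : ZMod τ → ZMod σ → ZMod n} (hT : MinSpatial n τ σ T)
    (p : ZMod τ × ZMod σ) : MinSpatial n τ σ (p +ᵥ T) := by
  rwa [minSpatial_iff_injective, stabilizer_vadd_of_addCommGroup, ← minSpatial_iff_injective]

end Translation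

section SimpleTiles

variable {n τ σ : ℕ} [NeZero τ] [NeZero σ]

lemma states_nonempty (T : ZMod τ → ZMod σ → ZMod n) : (states n τ σ T).Nonempty :=
  ⟨T 0 0, mem_image_of_mem _ (mem_univ (0, 0))⟩

lemma simple_iff_exists_rightNeighbor {T : ZMod τ → ZMod σ → ZMod n} :
    Simple n τ σ T ↔ ∃ g : ZMod n → ZMod n, ∀ i j, T i (j + 1) = g (T i j) := by
  classical
  have hpairs : (pairs n τ σ T).image Prod.fst = states n τ σ T := by
    rw [pairs, states, image_image]
    rfl
  constructor
  · intro hs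
    have hinj : Set.InjOn Prod.fst (pairs n τ σ T : Set (ZMod n × ZMod n)) :=
      injOn_of_card_image_eq ((congrArg card hpairs).trans hs.symm)
    refine ⟨fun a => (invFunOn Prod.fst (pairs n τ σ T : Set (ZMod n × ZMod n)) a).2,
      fun i j => ?_⟩
    have hmem : (T i j, T i (j + 1)) ∈ pairs n τ σ T := mem_image_of_mem _ (mem_univ (i, j))
    exact (congrArg Prod.snd (hinj.leftInvOn_invFunOn hmem)).symm
  · rintro ⟨g, hg⟩
    have : pairs n τ σ T = (states n τ σ T).image fun a => (a, g a) := by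
      simp only [pairs, states, image_image, hg]
      rfl
    rw [Simple, this, card_image_of_injective _ fun a b h => congrArg Prod.fst h]

lemma Simple.vadd {T : ZMod τ → ZMod σ → ZMod n} (hs : Simple n τ σ T) (p : ZMod τ × ZMod σ) :
    Simple n τ σ (p +ᵥ T) := by
  obtain ⟨g, hg⟩ := simple_iff_exists_rightNeighbor.1 hs
  refine simple_iff_exists_rightNeighbor.2 ⟨g, fun i j => ?_⟩
  simpa only [tile_vadd_apply, add_right_comm _ (1 : ZMod σ)] using hg (i + p.1) (j + p.2)

lemma GenBy.uncurry_add_eq_of_eq {f : ZMod n → ZMod n → ZMod n} {T : ZMod τ → ZMod σ → ZMod n}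
    (hf : GenBy n τ σ f T) (hs : Simple n τ σ T) {x y : ZMod τ × ZMod σ}
    (h : uncurry T x = uncurry T y) (z : ZMod τ × ZMod σ) :
    uncurry T (x + z) = uncurry T (y + z) := by
  obtain ⟨g, hg⟩ := simple_iff_exists_rightNeighbor.1 hs
  -- The translations preserving equality of states form a submonoid; it contains `(0, 1)` by the
  -- right-neighbour map and `(1, 1)` by the rule, and these two generate `ZMod τ × ZMod σ`.
  let R : AddSubmonoid (ZMod τ × ZMod σ) :=
    { carrier := {z | ∀ x y, uncurry T x = uncurry T y → uncurry T (x + z) = uncurry T (y + z)}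
      zero_mem' := by simp
      add_mem' := fun hz hw x y h => by simpa only [add_assoc] using hw _ _ (hz x y h) }
  have hright : ((0, 1) : ZMod τ × ZMod σ) ∈ R := fun x y h => by
    simpa [uncurry, hg] using congrArg g h
  have hdiag : ((1, 1) : ZMod τ × ZMod σ) ∈ R := fun x y h => by
    have h' := hright x y h
    simp only [uncurry, Prod.fst_add, Prod.snd_add, add_zero] at h h' ⊢
    rw [hf, hf, h, h']
  have hz : z = z.1.val • ((1, 1) : ZMod τ × ZMod σ) + (z.2 - (z.1.val : ZMod σ)).val • (0, 1) := by
    ext <;> simp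
  rw [hz]
  exact R.add_mem (R.nsmul_mem hdiag _) (R.nsmul_mem hright _) x y h

lemma GenBy.uncurry_eq_iff {f : ZMod n → ZMod n → ZMod n} {T : ZMod τ → ZMod σ → ZMod n}
    (hf : GenBy n τ σ f T) (hs : Simple n τ σ T) {x y : ZMod τ × ZMod σ} :
    uncurry T x = uncurry T y ↔ -x + y ∈ stabilizer (ZMod τ × ZMod σ) T := by
  rw [mem_stabilizer_tile_iff]
  refine ⟨fun h z => ?_, fun h => by simpa using (h x).symm⟩
  simpa [add_comm, add_left_comm] using (hf.uncurry_add_eq_of_eq hs h (-x + z)).symm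

lemma simple_genBy_stabilizer_eq_iff {T : ZMod τ → ZMod σ → ZMod n}
    {H : AddSubgroup (ZMod τ × ZMod σ)} :
    Simple n τ σ T ∧ (∃ f, GenBy n τ σ f T) ∧ stabilizer (ZMod τ × ZMod σ) T = H ↔
      ∀ x y, uncurry T x = uncurry T y ↔ -x + y ∈ H := by
  constructor
  · rintro ⟨hs, ⟨f, hf⟩, rfl⟩ x y
    exact hf.uncurry_eq_iff hs
  · intro hT
    set L := QuotientAddGroup.liftEmbeddingEquiv H ⟨uncurry T, hT⟩
    let step (u : ZMod τ × ZMod σ) : ZMod n → ZMod n := extend L (fun q => L (q + u)) id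
    have hstep (u : ZMod τ × ZMod σ) (i : ZMod τ) (j : ZMod σ) :
        step u (T i j) = T (i + u.1) (j + u.2) :=
      L.injective.extend_apply _ _ ((i, j) : ZMod τ × ZMod σ)
    refine ⟨simple_iff_exists_rightNeighbor.2 ⟨step (0, 1), fun i j => by simp [hstep]⟩,
      ⟨fun a _ => step (1, 1) a, fun i j => (hstep (1, 1) i j).symm⟩, ?_⟩
    ext p
    rw [mem_stabilizer_tile_iff]
    exact ⟨fun h => by simpa using (hT 0 p).1 (by simpa using (h 0).symm),
      fun hp x => (hT _ _).2 (by simpa using neg_mem hp)⟩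

lemma GenBy.card_states {f : ZMod n → ZMod n → ZMod n} {T : ZMod τ → ZMod σ → ZMod n}
    (hf : GenBy n τ σ f T) (hs : Simple n τ σ T) :
    #(states n τ σ T) = Nat.card ((ZMod τ × ZMod σ) ⧸ stabilizer (ZMod τ × ZMod σ) T) := by
  classical
  set L := QuotientAddGroup.liftEmbeddingEquiv _ ⟨uncurry T, fun x y => hf.uncurry_eq_iff hs⟩
  have : univ.image L = states n τ σ T := by
    rw [← image_univ_of_surjective (QuotientAddGroup.mk_surjective
      (s := stabilizer (ZMod τ × ZMod σ) T)), image_image]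
    rfl
  rw [← this, card_image_of_injective _ L.injective, card_univ, Nat.card_eq_fintype_card]

open scoped Classical in
lemma card_simple_genBy_stabilizer_eq [NeZero n] (H : AddSubgroup (ZMod τ × ZMod σ)) :
    #{T : ZMod τ → ZMod σ → ZMod n | Simple n τ σ T ∧ (∃ f, GenBy n τ σ f T) ∧
      stabilizer (ZMod τ × ZMod σ) T = H} = n.descFactorial (Nat.card ((ZMod τ × ZMod σ) ⧸ H)) := by
  rw [← Fintype.card_subtype, Fintype.card_congr ((Equiv.subtypeEquiv (Equiv.curry _ _ _).symm
      fun _ => simple_genBy_stabilizer_eq_iff).trans (QuotientAddGroup.liftEmbeddingEquiv H)),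
    Fintype.card_embedding_eq, ZMod.card, Nat.card_eq_fintype_card]

open scoped Classical in
lemma GenBy.card_filter_genBy_mul_pow [NeZero n] {f₀ : ZMod n → ZMod n → ZMod n}
    {T : ZMod τ → ZMod σ → ZMod n} (hf : GenBy n τ σ f₀ T) (hs : Simple n τ σ T) :
    #{f : ZMod n → ZMod n → ZMod n | GenBy n τ σ f T} * n ^ #(states n τ σ T) = n ^ (n ^ 2) := by
  have h := card_filter_eqOn_mul_pow (pairs n τ σ T) (uncurry f₀)
  rw [Fintype.card_prod, ZMod.card, ← sq, hs] at h
  rw [← h, ← Fintype.card_subtype, ← Fintype.card_subtype]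
  congr 1
  refine Fintype.card_congr (Equiv.subtypeEquiv (Equiv.curry _ _ _).symm fun f => ?_)
  constructor
  · rintro h q hq
    obtain ⟨⟨i, j⟩, -, rfl⟩ := mem_image.1 hq
    exact (h i j).symm.trans (hf i j)
  · exact fun h i j => (hf i j).trans (h _ (mem_image_of_mem _ (mem_univ (i, j)))).symm

end SimpleTiles

section Counting

variable {n τ σ : ℕ} [NeZero τ] [NeZero σ]

def IsSimpleTile (n τ σ : ℕ) [NeZero τ] [NeZero σ] (T : ZMod τ → ZMod σ → ZMod n) : Prop :=
  (∃ f, GenBy n τ σ f T) ∧ MinTemporal n τ σ T ∧ MinSpatial n τ σ T ∧ Simple n τ σ T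

lemma IsSimpleTile.card_stabilizer_dvd {T : ZMod τ → ZMod σ → ZMod n} (hT : IsSimpleTile n τ σ T) :
    Nat.card (stabilizer (ZMod τ × ZMod σ) T) ∣ Nat.gcd τ σ :=
  Nat.dvd_gcd
    (by simpa using AddSubgroup.card_dvd_of_injective _ (minSpatial_iff_injective.1 hT.2.2.1))
    (by simpa using AddSubgroup.card_dvd_of_injective _ (minTemporal_iff_injective.1 hT.2.1))

lemma IsSimpleTile.card_states {T : ZMod τ → ZMod σ → ZMod n} (hT : IsSimpleTile n τ σ T) :
    #(states n τ σ T) = τ * σ / Nat.card (stabilizer (ZMod τ × ZMod σ) T) := by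
  obtain ⟨⟨f, hf⟩, -, -, hs⟩ := hT
  rw [hf.card_states hs, AddSubgroup.card_quotient_eq_card_div, Nat.card_prod, Nat.card_zmod,
    Nat.card_zmod]

open scoped Classical in
lemma card_isSimpleTile_card_stabilizer_eq [NeZero n] {d : ℕ} (hd : d ∣ Nat.gcd τ σ) :
    #{T : ZMod τ → ZMod σ → ZMod n |
        IsSimpleTile n τ σ T ∧ Nat.card (stabilizer (ZMod τ × ZMod σ) T) = d} =
      d.totient * n.descFactorial (τ * σ / d) := by
  have hdτ : d ∣ τ := hd.trans (Nat.gcd_dvd_left τ σ)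
  have hdσ : d ∣ σ := hd.trans (Nat.gcd_dvd_right τ σ)
  have hd0 : d ≠ 0 := by
    rintro rfl
    exact NeZero.ne τ (Nat.eq_zero_of_zero_dvd hdτ)
  set E : Finset (ZMod τ × ZMod σ) := {p | addOrderOf p.1 = d ∧ addOrderOf p.2 = d}
  have hE : #E = d.totient * d.totient := by
    rw [show E = ({t : ZMod τ | addOrderOf t = d} : Finset _) ×ˢ
        ({c : ZMod σ | addOrderOf c = d} : Finset _) by ext; simp [E], card_product,
      IsAddCyclic.card_addOrderOf_eq_totient (by rwa [ZMod.card]),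
      IsAddCyclic.card_addOrderOf_eq_totient (by rwa [ZMod.card])]
  have hzmultiples {p : ZMod τ × ZMod σ} (hp : p ∈ E) :
      Injective ((AddMonoidHom.fst _ _).comp (AddSubgroup.zmultiples p).subtype) ∧
      Injective ((AddMonoidHom.snd _ _).comp (AddSubgroup.zmultiples p).subtype) ∧
      Nat.card (AddSubgroup.zmultiples p) = d := by
    obtain ⟨h₁, h₂⟩ := (mem_filter.1 hp).2
    have hp : addOrderOf p = d := by rw [Prod.addOrderOf, h₁, h₂, Nat.lcm_self]
    exact ⟨injective_comp_zmultiples_subtype _ (h₁.trans hp.symm),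
      injective_comp_zmultiples_subtype _ (h₂.trans hp.symm), (Nat.card_zmultiples p).trans hp⟩
  -- Double count the pairs `(T, p)` such that `p` generates the stabilizer of `T`.
  have key := card_mul_eq_card_mul (fun T p => stabilizer (ZMod τ × ZMod σ) T = .zmultiples p)
    (s := {T : ZMod τ → ZMod σ → ZMod n |
        IsSimpleTile n τ σ T ∧ Nat.card (stabilizer (ZMod τ × ZMod σ) T) = d})
    (t := E) (m := d.totient) (n := n.descFactorial (τ * σ / d)) ?_ ?_
  · rw [hE, mul_assoc, mul_comm] at key
    exact Nat.eq_of_mul_eq_mul_left (Nat.totient_pos.2 (Nat.pos_of_ne_zero hd0)) key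
  · intro T hT
    obtain ⟨hT, hcard⟩ := (mem_filter.1 hT).2
    have hfst := minSpatial_iff_injective.1 hT.2.2.1
    have hsnd := minTemporal_iff_injective.1 hT.2.1
    have := isAddCyclic_of_injective _ hfst
    rw [← hcard, ← card_filter_zmultiples_eq_totient]
    congr 1
    ext p
    simp only [bipartiteAbove, mem_filter, mem_univ, true_and, E]
    refine ⟨fun h => h.2.symm, fun hp => ⟨?_, hp.symm⟩⟩
    have hmem : p ∈ stabilizer _ T := hp ▸ AddSubgroup.mem_zmultiples p
    have hord : addOrderOf p = d := by rw [← hcard, ← hp, Nat.card_zmultiples]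
    rw [← hord, ← AddSubgroup.addOrderOf_mk p hmem]
    exact ⟨addOrderOf_injective _ hfst ⟨p, hmem⟩, addOrderOf_injective _ hsnd ⟨p, hmem⟩⟩
  · intro p hp
    obtain ⟨hfst, hsnd, hcard⟩ := hzmultiples hp
    rw [← hcard, show τ * σ = Nat.card (ZMod τ × ZMod σ) by simp,
      ← AddSubgroup.card_quotient_eq_card_div, ← card_simple_genBy_stabilizer_eq]
    congr 1
    ext T
    simp only [bipartiteBelow, mem_filter, mem_univ, true_and]
    constructor
    · rintro ⟨⟨⟨hf, -, -, hs⟩, -⟩, hT⟩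
      exact ⟨hs, hf, hT⟩
    · rintro ⟨hs, hf, hT⟩
      refine ⟨⟨⟨hf, ?_, ?_, hs⟩, by rw [hT]⟩, hT⟩
      · rwa [minTemporal_iff_injective, hT]
      · rwa [minSpatial_iff_injective, hT]

open scoped Classical in
lemma sum_isSimpleTile_card_states [NeZero n] (F : ℕ → ℝ) :
    ∑ T with IsSimpleTile n τ σ T, F #(states n τ σ T) =
      ∑ d ∈ (Nat.gcd τ σ).divisors,
        (d.totient * n.descFactorial (τ * σ / d) : ℕ) * F (τ * σ / d) := by
  have hgcd : Nat.gcd τ σ ≠ 0 := Nat.gcd_ne_zero_left (NeZero.ne τ)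
  rw [← sum_fiberwise_of_maps_to (g := fun T => Nat.card (stabilizer (ZMod τ × ZMod σ) T))
    fun T hT => Nat.mem_divisors.2 ⟨(mem_filter.1 hT).2.card_stabilizer_dvd, hgcd⟩]
  refine sum_congr rfl fun d hd => ?_
  rw [filter_filter, sum_congr rfl fun T hT => by
      rw [(mem_filter.1 hT).2.1.card_states, (mem_filter.1 hT).2.2],
    sum_const, card_isSimpleTile_card_stabilizer_eq (Nat.mem_divisors.1 hd).1, nsmul_eq_mul]

open scoped Classical in
lemma simpleTileCount_eq_sum_inv_card_states [NeZero n] (f : ZMod n → ZMod n → ZMod n) :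
    (simpleTileCount n τ σ f : ℝ) = ∑ T with GenBy n τ σ f T ∧ MinTemporal n τ σ T ∧
      MinSpatial n τ σ T ∧ Simple n τ σ T, (#(states n τ σ T) : ℝ)⁻¹ := by
  set P := fun T => GenBy n τ σ f T ∧ MinTemporal n τ σ T ∧ MinSpatial n τ σ T ∧ Simple n τ σ T
  set r := fun T₁ T₂ : {T // P T} =>
    ∃ (t : ZMod τ) (c : ZMod σ), ∀ i j, T₂.1 i j = T₁.1 (i + t) (j + c)
  have hr (T₁ T₂ : {T // P T}) :
      r T₁ T₂ ↔ orbit (ZMod τ × ZMod σ) T₂.1 = orbit (ZMod τ × ZMod σ) T₁.1 := by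
    rw [orbit_eq_iff, mem_orbit_iff]
    exact ⟨fun ⟨t, c, h⟩ =>
        ⟨((t, c) : ZMod τ × ZMod σ), funext fun i => funext fun j => (h i j).symm⟩,
      fun ⟨⟨t, c⟩, h⟩ => ⟨t, c, fun i j => (congrFun (congrFun h i) j).symm⟩⟩
  have hequiv : Equivalence r :=
    ⟨fun _ => (hr _ _).2 rfl, fun h => (hr _ _).2 ((hr _ _).1 h).symm,
      fun h h' => (hr _ _).2 (((hr _ _).1 h').trans ((hr _ _).1 h))⟩
  have hclass (T : {T // P T}) : #{T' | r T T'} = #(states n τ σ T.1) := by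
    rw [← Fintype.card_subtype, ← Nat.card_eq_fintype_card,
      Nat.card_congr ((Equiv.subtypeEquivRight fun T' => (hr T T').trans orbit_eq_iff).trans
        (Equiv.subtypeSubtypeEquivSubtype fun h => ?_)),
      Nat.card_congr (orbitEquivQuotientStabilizer _ _), T.2.1.card_states T.2.2.2.2]
    obtain ⟨p, rfl⟩ := h
    obtain ⟨hf, hmt, hms, hs⟩ := T.2
    exact ⟨hf.vadd p, hmt.vadd p, hms.vadd p, hs.vadd p⟩
  rw [simpleTileCount, Nat.card_quot_eq_sum_inv_card hequiv]
  simp_rw [hclass]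
  exact (sum_subtype (p := P) _ (fun T => mem_filter.trans (and_iff_right (mem_univ T)))
    fun T => (#(states n τ σ T) : ℝ)⁻¹).symm

open scoped Classical in
lemma sum_simpleTileCount [NeZero n] :
    ∑ f : ZMod n → ZMod n → ZMod n, (simpleTileCount n τ σ f : ℝ) =
      ∑ T with IsSimpleTile n τ σ T,
        (n : ℝ) ^ (n ^ 2) / ((n : ℝ) ^ #(states n τ σ T) * #(states n τ σ T)) := by
  simp_rw [simpleTileCount_eq_sum_inv_card_states, sum_filter]
  rw [sum_comm]
  refine sum_congr rfl fun T _ => ?_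
  rw [← sum_filter, sum_const, nsmul_eq_mul]
  split_ifs with hT
  · obtain ⟨⟨f₀, hf₀⟩, hrest⟩ := hT
    have hcard :
        (#{f | GenBy n τ σ f T} : ℝ) * (n : ℝ) ^ #(states n τ σ T) = (n : ℝ) ^ (n ^ 2) := by
      exact_mod_cast hf₀.card_filter_genBy_mul_pow hrest.2.2
    have hn : (n : ℝ) ≠ 0 := Nat.cast_ne_zero.2 (NeZero.ne n)
    have hs : (#(states n τ σ T) : ℝ) ≠ 0 := Nat.cast_ne_zero.2 (states_nonempty T).card_ne_zero
    rw [filter_congr fun f _ => and_iff_left hrest, ← hcard]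
    field_simp
  · rw [filter_false_of_mem fun f _ hf => hT ⟨⟨f, hf.1⟩, hf.2⟩, card_empty, Nat.cast_zero, zero_mul]

end Counting

section Asymptotics

open Filter Topology

lemma dvd_mul_of_mem_divisors_gcd {τ σ d : ℕ} (hd : d ∈ (Nat.gcd τ σ).divisors) : d ∣ τ * σ :=
  ((Nat.mem_divisors.1 hd).1.trans (Nat.gcd_dvd_left τ σ)).mul_right σ

lemma div_ne_zero_of_mem_divisors_gcd {τ σ d : ℕ} [NeZero τ] [NeZero σ]
    (hd : d ∈ (Nat.gcd τ σ).divisors) : τ * σ / d ≠ 0 :=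
  (Nat.div_ne_zero_iff_of_dvd (dvd_mul_of_mem_divisors_gcd hd)).2
    ⟨mul_ne_zero (NeZero.ne τ) (NeZero.ne σ), (Nat.pos_of_mem_divisors hd).ne'⟩

lemma expectedSimpleTiles_eq (τ σ n : ℕ) [NeZero τ] [NeZero σ] :
    expectedSimpleTiles τ σ n = ∑ d ∈ (Nat.gcd τ σ).divisors,
      d.totient / (τ * σ / d : ℕ) *
        ((n.descFactorial (τ * σ / d) : ℝ) / (n : ℝ) ^ (τ * σ / d)) := by
  refine sum_congr rfl fun d hd => ?_
  have hs := div_ne_zero_of_mem_divisors_gcd hd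
  rw [Nat.descFactorial_eq_factorial_mul_choose, ← Nat.mul_factorial_pred hs]
  have hs' : ((τ * σ / d : ℕ) : ℝ) ≠ 0 := Nat.cast_ne_zero.2 hs
  push_cast
  field_simp

lemma sum_simpleTileCount_div (τ σ n : ℕ) [NeZero τ] [NeZero σ] [NeZero n] :
    (∑ f : ZMod n → ZMod n → ZMod n, (simpleTileCount n τ σ f : ℝ)) / (n : ℝ) ^ (n ^ 2) =
      expectedSimpleTiles τ σ n := by
  rw [sum_simpleTileCount,
    sum_isSimpleTile_card_states fun s => (n : ℝ) ^ (n ^ 2) / ((n : ℝ) ^ s * s), sum_div,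
    expectedSimpleTiles_eq]
  refine sum_congr rfl fun d hd => ?_
  have hs : ((τ * σ / d : ℕ) : ℝ) ≠ 0 := Nat.cast_ne_zero.2 (div_ne_zero_of_mem_divisors_gcd hd)
  have hn : (n : ℝ) ≠ 0 := Nat.cast_ne_zero.2 (NeZero.ne n)
  push_cast
  field_simp

lemma tendsto_descFactorial_div_pow (s : ℕ) :
    Tendsto (fun n : ℕ => (n.descFactorial s : ℝ) / (n : ℝ) ^ s) atTop (𝓝 1) := by
  have hz : ∀ᶠ n : ℕ in atTop, (n : ℝ) ^ s ≠ 0 :=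
    eventually_atTop.2 ⟨1, fun n hn => pow_ne_zero _ (Nat.cast_ne_zero.2 (by omega))⟩
  exact (Asymptotics.isEquivalent_iff_tendsto_one hz).1 (isEquivalent_descFactorial s)

lemma tendsto_expectedSimpleTiles (τ σ : ℕ) [NeZero τ] [NeZero σ] :
    Tendsto (expectedSimpleTiles τ σ) atTop (𝓝 (lamR τ σ)) := by
  have hlim : lamR τ σ = ∑ d ∈ (Nat.gcd τ σ).divisors, d.totient / (τ * σ / d : ℕ) * (1 : ℝ) := by
    rw [lamR, sum_div]
    refine sum_congr rfl fun d hd => ?_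
    have hd0 : (d : ℝ) ≠ 0 := Nat.cast_ne_zero.2 (Nat.pos_of_mem_divisors hd).ne'
    have hτσ : (τ : ℝ) * σ ≠ 0 := by simp [NeZero.ne τ, NeZero.ne σ]
    rw [Nat.cast_div (dvd_mul_of_mem_divisors_gcd hd) hd0]
    push_cast
    field_simp
  rw [funext fun n => expectedSimpleTiles_eq τ σ n, hlim]
  exact tendsto_finsetSum _ fun d _ => (tendsto_descFactorial_div_pow _).const_mul _

end Asymptotics

theorem expected_simple_tiles_general (τ σ : ℕ) [NeZero τ] [NeZero σ] :
    (∀ (n : ℕ) [NeZero n],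
      (∑ f : ZMod n → ZMod n → ZMod n, (simpleTileCount n τ σ f : ℝ)) / (n : ℝ) ^ (n ^ 2) =
        expectedSimpleTiles τ σ n) ∧
    Filter.Tendsto (expectedSimpleTiles τ σ) Filter.atTop (nhds (lamR τ σ)) :=
  ⟨fun n _ => sum_simpleTileCount_div τ σ n, tendsto_expectedSimpleTiles τ σ⟩

/-- The expected number of simple tiles with periods `τ`, `σ` under a uniformly
random `n`-state rule equals `Σ_{d | gcd(τ,σ)} φ(d)·C(n,τσ/d)·(τσ/d - 1)!/n^(τσ/d)`,
which converges to `λ_{τ,σ}` as `n → ∞`. -/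
theorem expected_simple_tiles (τ σ : ℕ) [NeZero τ] [NeZero σ] (hτ : 0 < τ) (hσ : 0 < σ) :
    (∀ (n : ℕ) [NeZero n],
      (∑ f : ZMod n → ZMod n → ZMod n, (simpleTileCount n τ σ f : ℝ)) / (n : ℝ) ^ (n ^ 2) =
        expectedSimpleTiles τ σ n) ∧
    Filter.Tendsto (expectedSimpleTiles τ σ) Filter.atTop (nhds (lamR τ σ)) :=
  expected_simple_tiles_general τ σ
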